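/- arXiv:1708.09275 — 2 statements merged into one kernel-verified Lean document; each statement's English description precedes it below -/
import Mathlib

section
/- Let R be a commutative ring of characteristic 0 with fraction field K, let m ≥ 2 be an integer, and let φ(x) = x^m · Σ_{k≥0} b_k x^k ∈ R[[x]] with b_0 = 1, all b_k ∈ R, and suppose that k!·b_k ∈ mR for all 1 ≤ k < m. Then the Böttcher coordinate f_φ(x) and its compositional inverse f_φ^{-1}(x) are both of the form x · Σ_{k≥0} (a_k/k!) x^k with a_0 = 1 and a_k ∈ R for all k. -/
/-- Composition `f(g(x))` of formal power series, intended for `g` with zero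
constant coefficient. -/
noncomputable def PowerSeries.comp {K : Type*} [CommSemiring K] (f g : PowerSeries K) :
    PowerSeries K :=
  PowerSeries.mk fun n =>
    PowerSeries.coeff n
      (∑ k ∈ Finset.range (n + 1), PowerSeries.C (PowerSeries.coeff k f) * g ^ k)

/-!
Call a series `A ∈ K⟦X⟧` Hurwitz over a subring `S` when `n! · [Xⁿ] A ∈ S` for all `n`; these
series form a subring, stable under `d/dX`. Write `f = X v`. The coefficient of `X^(m+n)` in
`φ(f) = f(X^m)` reads `m vₙ = [m ∣ n] v_(n/m) - [Xⁿ] v̄^m - ∑_(1 ≤ t ≤ n) b_t [X^(n-t)] v̄^(m+t)`,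
where `v̄` is `v` truncated below degree `n`. After multiplication by `n!`, every term on the right
lies in `m S`: the first since `m · (n/m)! ∣ n!`, the second since
`n [Xⁿ] A^m = m [X^(n-1)] (A^(m-1) A')`, the third by the hypothesis on `t! b_t` for `t < m`
and since `m ∣ t!` for `t ≥ m`. So `v` is Hurwitz by strong induction on `n`. For `g = X z`, the
coefficient of `X^(n+1)` in `f(g) = X` expresses `zₙ` through `v` and lower coefficients of `z`,
and the same induction applies.
-/

namespace Nat

theorem mul_factorial_dvd_factorial_mul {m q : ℕ} (hm : 0 < m) (hq : 0 < q) :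
    m * q ! ∣ (m * q)! := by
  have hqmq : q ≤ m * q := Nat.le_mul_of_pos_left q hm
  rw [← mul_factorial_pred hq.ne', ← mul_assoc, ← mul_factorial_pred (by omega : m * q ≠ 0)]
  exact mul_dvd_mul_left _ (factorial_dvd_factorial (by omega))

end Nat

namespace PowerSeries

open Finset Nat

section Hurwitz

variable {K : Type*} [CommRing K]

theorem factorial_mul_mul_eq_choose_mul {n j : ℕ} (h : j ≤ n) (a b : K) :
    (n ! : K) * (a * b) = n.choose j * ((j ! : K) * a) * (((n - j)! : K) * b) := by
  rw [← choose_mul_factorial_mul_factorial h]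
  push_cast
  ring

/-- Series `∑ aₙ Xⁿ / n!` with all `aₙ ∈ S`. -/
def hurwitz (S : Subring K) : Subring K⟦X⟧ where
  carrier := {A | ∀ n, (n ! : K) * coeff n A ∈ S}
  mul_mem' {A B} hA hB n := by
    rw [coeff_mul, mul_sum]
    refine S.sum_mem fun p hp => ?_
    rw [HasAntidiagonal.mem_antidiagonal] at hp
    rw [factorial_mul_mul_eq_choose_mul (show p.1 ≤ n by omega), show n - p.1 = p.2 by omega]
    exact S.mul_mem (S.mul_mem (natCast_mem S _) (hA p.1)) (hB p.2)
  one_mem' n := by rcases n with _ | n <;> simp [coeff_one]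
  add_mem' {A B} hA hB n := by
    simpa only [map_add, mul_add] using S.add_mem (hA n) (hB n)
  zero_mem' n := by simp
  neg_mem' {A} hA n := by
    simpa only [map_neg, mul_neg] using S.neg_mem (hA n)

variable {S : Subring K}

theorem mem_hurwitz {A : K⟦X⟧} : A ∈ hurwitz S ↔ ∀ n, (n ! : K) * coeff n A ∈ S := Iff.rfl

theorem derivative_mem_hurwitz {A : K⟦X⟧} (hA : A ∈ hurwitz S) : d⁄dX K A ∈ hurwitz S := by
  intro n
  have h : (n ! : K) * (coeff (n + 1) A * (n + 1 : K)) = ((n + 1)! : K) * coeff (n + 1) A := by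
    push_cast [factorial_succ]
    ring
  rw [coeff_derivative, h]
  exact hA (n + 1)

theorem coe_trunc_mem_hurwitz {A : K⟦X⟧} {n : ℕ} (hA : ∀ j < n, (j ! : K) * coeff j A ∈ S) :
    (trunc n A : K⟦X⟧) ∈ hurwitz S := by
  intro j
  rw [Polynomial.coeff_coe, coeff_trunc]
  split_ifs with hj
  · exact hA j hj
  · simp

end Hurwitz

section Powers

variable {K : Type*} [CommRing K]

theorem factorial_succ_mul_coeff_succ_pow (A : K⟦X⟧) (M n : ℕ) :
    ((n + 1)! : K) * coeff (n + 1) (A ^ M) =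
      M * ((n ! : K) * coeff n (A ^ (M - 1) * d⁄dX K A)) := by
  have h := congrArg (coeff n) (Derivation.leibniz_pow (d⁄dX K) (a := A) M)
  rw [coeff_derivative, smul_eq_mul, map_nsmul, nsmul_eq_mul] at h
  push_cast [factorial_succ]
  linear_combination (n ! : K) * h

theorem coeff_trunc_pow_of_lt (A : K⟦X⟧) (M : ℕ) {j n : ℕ} (h : j < n) :
    coeff j ((trunc n A : K⟦X⟧) ^ M) = coeff j (A ^ M) := by
  rw [← coeff_coe_trunc_of_lt h, trunc_trunc_pow, coeff_coe_trunc_of_lt h]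

theorem coeff_pow_sub_coeff_trunc_pow (A : K⟦X⟧) (M : ℕ) {n : ℕ} (hn : 0 < n) :
    coeff n (A ^ M) - coeff n ((trunc n A : K⟦X⟧) ^ M) =
      M * constantCoeff A ^ (M - 1) * coeff n A := by
  set B : K⟦X⟧ := (trunc n A : K⟦X⟧)
  obtain ⟨D, hD⟩ : X ^ n ∣ A - B := X_pow_dvd_iff.2 fun j hj => by
    rw [map_sub, coeff_coe_trunc_of_lt hj, sub_self]
  have hXn (P : K⟦X⟧) : coeff n (X ^ n * P) = constantCoeff P := by
    simpa using coeff_X_pow_mul P n 0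
  have hD0 : constantCoeff D = coeff n A := by
    have := congrArg (coeff n) hD
    rw [map_sub, Polynomial.coeff_coe, coeff_trunc, if_neg (lt_irrefl n), sub_zero, hXn] at this
    exact this.symm
  have hB0 : constantCoeff B = constantCoeff A := by
    rw [← coeff_zero_eq_constantCoeff_apply, ← coeff_zero_eq_constantCoeff_apply,
      coeff_coe_trunc_of_lt hn]
  rw [← map_sub, ← geom_sum₂_mul, hD, mul_left_comm, hXn, map_mul, hD0, map_sum]
  simp only [map_mul, map_pow, hB0, ← pow_add]
  rw [sum_congr rfl fun i hi => by rw [show i + (M - 1 - i) = M - 1 by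
    have := mem_range.1 hi; omega], sum_const, card_range, nsmul_eq_mul]

end Powers

section Comp

variable {K : Type*} [CommRing K]

theorem eq_X_mul_shift_of_coeff_zero {f : K⟦X⟧} (hf : coeff 0 f = 0) :
    f = X * mk fun k => coeff (k + 1) f := by
  simpa [← coeff_zero_eq_constantCoeff_apply, hf] using f.eq_X_mul_shift_add_const

theorem coeff_comp (f g : K⟦X⟧) (N : ℕ) :
    coeff N (f.comp g) = ∑ k ∈ range (N + 1), coeff k f * coeff N (g ^ k) := by
  rw [PowerSeries.comp, coeff_mk, map_sum]
  exact sum_congr rfl fun k _ => coeff_C_mul ..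

theorem coeff_comp_X_mul (f u : K⟦X⟧) (N : ℕ) :
    coeff N (f.comp (X * u)) = ∑ k ∈ range (N + 1), coeff k f * coeff (N - k) (u ^ k) := by
  rw [coeff_comp]
  refine sum_congr rfl fun k hk => ?_
  have hkN : k ≤ N := Nat.lt_succ_iff.1 (mem_range.1 hk)
  rw [mul_pow, ← coeff_X_pow_mul (u ^ k) k (N - k), Nat.sub_add_cancel hkN]

theorem coeff_comp_X_pow (f : K⟦X⟧) {m : ℕ} (hm : 0 < m) (N : ℕ) :
    coeff N (f.comp (X ^ m)) = if m ∣ N then coeff (N / m) f else 0 := by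
  simp_rw [coeff_comp, ← pow_mul, coeff_X_pow, mul_ite, mul_one, mul_zero]
  split_ifs with hdvd
  · obtain ⟨q, rfl⟩ := hdvd
    have hq : q < m * q + 1 := Nat.lt_succ_of_le (Nat.le_mul_of_pos_left q hm)
    rw [Nat.mul_div_cancel_left q hm, sum_eq_single_of_mem q (mem_range.2 hq)]
    · rw [if_pos rfl]
    · exact fun k _ hk => if_neg fun h => hk (Nat.eq_of_mul_eq_mul_left hm h).symm
  · exact sum_eq_zero fun k _ => if_neg fun hk => hdvd ⟨k, hk⟩

theorem coeff_bottcher_recurrence {ψ v : K⟦X⟧} {m : ℕ} (hm : 0 < m)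
    (hψlow : ∀ k < m, coeff k ψ = 0) (hψlead : coeff m ψ = 1)
    (hB : ψ.comp (X * v) = (X * v).comp (X ^ m)) (n : ℕ) :
    coeff n (v ^ m) + ∑ t ∈ range n,
        coeff (m + (t + 1)) ψ * coeff (n - (t + 1)) (v ^ (m + (t + 1))) =
      if m ∣ n then coeff (n / m) v else 0 := by
  have h := congrArg (coeff (m + n)) hB
  have hrhs : (if m ∣ m + n then coeff ((m + n) / m) (X * v) else 0) =
      if m ∣ n then coeff (n / m) v else 0 := by
    rw [add_comm m n, Nat.add_div_right n hm, coeff_succ_X_mul]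
    exact if_congr (Nat.dvd_add_left (dvd_refl m)) rfl rfl
  rw [coeff_comp_X_mul, coeff_comp_X_pow _ hm, hrhs, add_assoc, sum_range_add,
    sum_eq_zero fun k hk => by rw [hψlow k (mem_range.1 hk), zero_mul], zero_add,
    sum_range_succ'] at h
  simpa only [Nat.add_sub_add_left, add_zero, Nat.add_sub_cancel_left, hψlead, one_mul, add_comm]
    using h

theorem coeff_succ_comp_X_mul_X_mul (v z : K⟦X⟧) (n : ℕ) :
    coeff (n + 1) ((X * v).comp (X * z)) =
      ∑ j ∈ range (n + 1), coeff j v * coeff (n - j) (z ^ (j + 1)) := by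
  rw [coeff_comp_X_mul, sum_range_succ']
  simp only [coeff_succ_X_mul, Nat.add_sub_add_right, coeff_zero_X_mul, zero_mul, add_zero]

end Comp

section Field

variable {K : Type*} [Field K] {S : Subring K}

theorem inv_mul_factorial_mul_coeff_pow_mem {A : K⟦X⟧} (hA : A ∈ hurwitz S) {M : ℕ}
    (hM : (M : K) ≠ 0) {n : ℕ} (hn : 0 < n) :
    (M : K)⁻¹ * ((n ! : K) * coeff n (A ^ M)) ∈ S := by
  obtain ⟨n, rfl⟩ := Nat.exists_eq_succ_of_ne_zero hn.ne'
  rw [factorial_succ_mul_coeff_succ_pow, inv_mul_cancel_left₀ hM]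
  exact (hurwitz S).mul_mem ((hurwitz S).pow_mem hA _) (derivative_mem_hurwitz hA) n

theorem mem_hurwitz_of_comp_eq_comp_X_pow {ψ v : K⟦X⟧} {m : ℕ} (hm : 2 ≤ m) (hmK : (m : K) ≠ 0)
    (hψlow : ∀ k < m, coeff k ψ = 0) (hψlead : coeff m ψ = 1)
    (hψdiv : ∀ k, 0 < k → (m : K)⁻¹ * ((k ! : K) * coeff (m + k) ψ) ∈ S)
    (hv0 : constantCoeff v = 1) (hB : ψ.comp (X * v) = (X * v).comp (X ^ m)) :
    v ∈ hurwitz S := by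
  refine mem_hurwitz.2 fun n => ?_
  induction n using Nat.strong_induction_on with
  | _ n ih =>
  rcases n.eq_zero_or_pos with rfl | hn
  · simp [hv0]
  set vb : K⟦X⟧ := (trunc n v : K⟦X⟧)
  have hvb : vb ∈ hurwitz S := coe_trunc_mem_hurwitz ih
  have hrec := coeff_bottcher_recurrence (by omega) hψlow hψlead hB n
  have hpow := coeff_pow_sub_coeff_trunc_pow v m hn
  rw [hv0, one_pow, mul_one] at hpow
  have hsum : ∑ t ∈ range n, coeff (m + (t + 1)) ψ * coeff (n - (t + 1)) (v ^ (m + (t + 1))) =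
      ∑ t ∈ range n, coeff (m + (t + 1)) ψ * coeff (n - (t + 1)) (vb ^ (m + (t + 1))) :=
    sum_congr rfl fun t ht => by
      rw [coeff_trunc_pow_of_lt v _ (by have := mem_range.1 ht; omega : n - (t + 1) < n)]
  have hv : (n ! : K) * coeff n v =
      (m : K)⁻¹ * ((n ! : K) * if m ∣ n then coeff (n / m) v else 0) -
        (m : K)⁻¹ * ((n ! : K) * coeff n (vb ^ m)) -
        (m : K)⁻¹ * ((n ! : K) * ∑ t ∈ range n,
          coeff (m + (t + 1)) ψ * coeff (n - (t + 1)) (vb ^ (m + (t + 1)))) := by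
    linear_combination ((m : K)⁻¹ * n !) * (hrec - hpow - hsum) -
      (n ! * coeff n v) * inv_mul_cancel₀ hmK
  rw [hv, mul_sum, mul_sum]
  refine S.sub_mem (S.sub_mem ?_ (inv_mul_factorial_mul_coeff_pow_mem hvb hmK hn))
    (S.sum_mem fun t ht => ?_)
  · split_ifs with hdvd
    · obtain ⟨q, rfl⟩ := hdvd
      have hq : 0 < q := Nat.pos_of_mul_pos_left hn
      obtain ⟨c, hc⟩ := mul_factorial_dvd_factorial_mul (by omega : 0 < m) hq
      rw [Nat.mul_div_cancel_left q (by omega), hc]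
      convert S.mul_mem (natCast_mem S c) (ih q (by nlinarith)) using 1
      push_cast
      field_simp
    · simp
  · convert S.mul_mem (S.mul_mem (natCast_mem S (n.choose (t + 1))) (hψdiv (t + 1) t.succ_pos))
      ((hurwitz S).pow_mem hvb (m + (t + 1)) (n - (t + 1))) using 1
    rw [factorial_mul_mul_eq_choose_mul (mem_range.1 ht)]
    ring

end Field

theorem mem_hurwitz_of_comp_eq_X {K : Type*} [CommRing K] {S : Subring K} {v z : K⟦X⟧}
    (hv : v ∈ hurwitz S) (hv0 : constantCoeff v = 1) (hinv : (X * v).comp (X * z) = X) :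
    z ∈ hurwitz S := by
  refine mem_hurwitz.2 fun n => ?_
  induction n using Nat.strong_induction_on with
  | _ n ih =>
  have hrec := coeff_succ_comp_X_mul_X_mul v z n
  rw [hinv, ← mul_one X, coeff_succ_X_mul, sum_range_succ', coeff_zero_eq_constantCoeff_apply,
    hv0, one_mul, Nat.sub_zero, zero_add, pow_one] at hrec
  have htrunc : ∀ j ∈ range n, coeff (j + 1) v * coeff (n - (j + 1)) (z ^ (j + 1 + 1)) =
      coeff (j + 1) v * coeff (n - (j + 1)) ((trunc n z : K⟦X⟧) ^ (j + 1 + 1)) :=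
    fun j hj => by rw [coeff_trunc_pow_of_lt _ _ (by have := mem_range.1 hj; omega)]
  have hz : (n ! : K) * coeff n z = (n ! : K) * coeff n 1 -
      ∑ j ∈ range n, (n ! : K) *
        (coeff (j + 1) v * coeff (n - (j + 1)) ((trunc n z : K⟦X⟧) ^ (j + 1 + 1))) := by
    rw [← mul_sum, ← sum_congr rfl htrunc]
    linear_combination (n ! : K) * hrec.symm
  rw [hz]
  refine S.sub_mem ((hurwitz S).one_mem n) (S.sum_mem fun j hj => ?_)
  rw [factorial_mul_mul_eq_choose_mul (mem_range.1 hj)]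
  exact S.mul_mem (S.mul_mem (natCast_mem S _) (hv (j + 1)))
    ((hurwitz S).pow_mem (coe_trunc_mem_hurwitz ih) _ _)

section FractionField

variable {R K : Type*} [CommRing R] [Field K] [Algebra R K]

theorem inv_mul_factorial_mul_coeff_map_mem_range {ψ : R⟦X⟧} {m : ℕ} (hmK : (m : K) ≠ 0)
    (hψdiv : ∀ k, 1 ≤ k → k < m → ∃ c : R, (k ! : R) * coeff (m + k) ψ = m * c)
    (k : ℕ) (hk : 0 < k) :
    (m : K)⁻¹ * ((k ! : K) * coeff (m + k) (ψ.map (algebraMap R K))) ∈ (algebraMap R K).range := by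
  rw [coeff_map]
  rcases lt_or_ge k m with hkm | hmk
  · obtain ⟨c, hc⟩ := hψdiv k hk hkm
    have hcK := congrArg (algebraMap R K) hc
    rw [map_mul, map_mul, map_natCast, map_natCast] at hcK
    exact ⟨c, by rw [hcK, inv_mul_cancel_left₀ hmK]⟩
  · obtain ⟨d, hd⟩ := Nat.dvd_factorial (Nat.pos_of_ne_zero fun h => hmK (by simp [h])) hmk
    refine ⟨d * coeff (m + k) ψ, ?_⟩
    rw [hd, map_mul, map_natCast]
    push_cast
    rw [mul_assoc, inv_mul_cancel_left₀ hmK]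

theorem exists_coeff_succ_eq_algebraMap_div_factorial [CharZero K]
    (hinj : Function.Injective (algebraMap R K)) {f : K⟦X⟧}
    (hf : (mk fun k => coeff (k + 1) f) ∈ hurwitz (algebraMap R K).range)
    (hf1 : coeff 1 f = 1) :
    ∃ a : ℕ → R, a 0 = 1 ∧ ∀ k, coeff (k + 1) f = algebraMap R K (a k) / (k ! : K) := by
  choose a ha using mem_hurwitz.1 hf
  simp only [coeff_mk] at ha
  refine ⟨a, hinj ?_, fun k => ?_⟩
  · simpa [hf1] using ha 0
  · rw [ha k, mul_div_cancel_left₀ _ (Nat.cast_ne_zero.2 k.factorial_ne_zero)]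

end FractionField

end PowerSeries

/-- For `φ = x^m ∑ b_k x^k ∈ R[[x]]` with `b_0 = 1` and
`k!·b_k ∈ mR` for `1 ≤ k < m`, the Böttcher coordinate and its compositional
inverse have the form `x ∑ (a_k/k!) x^k` with `a_0 = 1` and all `a_k ∈ R`. -/
theorem bottcher_denominator_bound_of_divisible {R K : Type*} [CommRing R] [CharZero R]
    [Field K] [Algebra R K] [IsFractionRing R K]
    (m : ℕ) (hm : 2 ≤ m)
    (φ : PowerSeries R) (hφlow : ∀ k < m, PowerSeries.coeff k φ = 0)
    (hφlead : PowerSeries.coeff m φ = 1)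
    (hφdiv : ∀ k, 1 ≤ k → k < m →
      ∃ c : R, (Nat.factorial k : R) * PowerSeries.coeff (m + k) φ = (m : R) * c)
    (f : PowerSeries K) (hf0 : PowerSeries.coeff 0 f = 0)
    (hf1 : PowerSeries.coeff 1 f = 1)
    (hfB : (φ.map (algebraMap R K)).comp f = f.comp (PowerSeries.X ^ m))
    (g : PowerSeries K) (hg0 : PowerSeries.coeff 0 g = 0)
    (hg1 : PowerSeries.coeff 1 g = 1)
    (hginv : f.comp g = PowerSeries.X) :
    (∃ a : ℕ → R, a 0 = 1 ∧ ∀ k,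
        PowerSeries.coeff (k + 1) f = algebraMap R K (a k) / (Nat.factorial k : K)) ∧
      (∃ a : ℕ → R, a 0 = 1 ∧ ∀ k,
        PowerSeries.coeff (k + 1) g = algebraMap R K (a k) / (Nat.factorial k : K)) := by
  have hinj := IsFractionRing.injective R K
  have : CharZero K := charZero_of_injective_algebraMap hinj
  have hmK : (m : K) ≠ 0 := Nat.cast_ne_zero.2 (by omega)
  set v : PowerSeries K := PowerSeries.mk fun k => PowerSeries.coeff (k + 1) f
  set z : PowerSeries K := PowerSeries.mk fun k => PowerSeries.coeff (k + 1) g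
  have hfv : f = PowerSeries.X * v := PowerSeries.eq_X_mul_shift_of_coeff_zero hf0
  have hgz : g = PowerSeries.X * z := PowerSeries.eq_X_mul_shift_of_coeff_zero hg0
  have hv0 : PowerSeries.constantCoeff v = 1 := by simpa [v] using hf1
  have hv : v ∈ PowerSeries.hurwitz (algebraMap R K).range :=
    PowerSeries.mem_hurwitz_of_comp_eq_comp_X_pow hm hmK (fun k hk => by simp [hφlow k hk])
      (by simp [hφlead]) (PowerSeries.inv_mul_factorial_mul_coeff_map_mem_range hmK hφdiv) hv0
      (hfv ▸ hfB)
  have hz : z ∈ PowerSeries.hurwitz (algebraMap R K).range :=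
    PowerSeries.mem_hurwitz_of_comp_eq_X hv hv0 (hfv ▸ hgz ▸ hginv)
  exact ⟨PowerSeries.exists_coeff_succ_eq_algebraMap_div_factorial hinj hv hf1,
    PowerSeries.exists_coeff_succ_eq_algebraMap_div_factorial hinj hz hg1⟩
end

section
/- Let p be a prime and let K be a complete nonarchimedean (ultrametric) normed field of characteristic 0 with ‖p‖ = p^{-1}. Let f(x) = x·Σ_{k≥0} (a_k/k!) x^k ∈ K[[x]] with ‖a_0‖ = 1 and ‖a_k‖ ≤ 1 for all k. Then the series f converges at every point of the disk D = {x ∈ K : ‖x‖ < p^{-1/(p-1)}}, and its evaluation defines a bijective isometry f : D → D; in particular ‖f(x) − f(y)‖ = ‖x − y‖ for all x, y ∈ D. -/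
/-! The factorials are exactly what the disk allows: by Legendre's formula `(p - 1) v_p(k!) ≤ k`,
so with `r = p^{-1/(p-1)}` the coefficients satisfy `‖a_k / k!‖ ≤ r⁻¹ ^ k`. For any series
`f(x) = ∑ c_k x^{k+1}` with `‖c_0‖ = 1` and `‖c_k‖ ≤ r⁻¹ ^ k`, the ultrametric inequality bounds
`f(x) - f(y) - c_0 (x - y)` by `r⁻¹ max(‖x‖, ‖y‖) ‖x - y‖`, strictly less than `‖x - y‖` on the
open disk of radius `r`; this makes `f` an isometry there. For surjectivity, `y` is the fixed
point of the contraction `z ↦ z + c_0⁻¹ (y - f z)` of the closed ball of radius `‖y‖`. -/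

open IsUltrametricDist Metric Set

section NatCast

lemma norm_natCast_eq_one_of_coprime {R : Type*} [SeminormedRing R] [NormOneClass R]
    [IsUltrametricDist R] {p u : ℕ} (hp : ‖(p : R)‖ < 1) (hpu : p.Coprime u) :
    ‖(u : R)‖ = 1 := by
  obtain ⟨s, t, hst⟩ := Nat.isCoprime_iff_coprime.2 hpu
  have hcast : (s : R) * p + t * u = 1 := by exact_mod_cast congrArg (Int.cast : ℤ → R) hst
  have hsp : ‖(s : R) * p‖ < 1 :=
    (norm_mul_le _ _).trans_lt (mul_lt_one_of_nonneg_of_lt_one_right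
      (norm_intCast_le_one R s) (norm_nonneg _) hp)
  have htu : ‖(t : R) * u‖ ≤ ‖(u : R)‖ :=
    (norm_mul_le _ _).trans (mul_le_of_le_one_left (norm_nonneg _) (norm_intCast_le_one R t))
  refine le_antisymm (norm_natCast_le_one R u) ?_
  have h1 : 1 ≤ max ‖(s : R) * p‖ ‖(t : R) * u‖ := by
    simpa [hcast] using norm_add_le_max ((s : R) * p) ((t : R) * u)
  exact (le_max_iff.1 h1).resolve_left hsp.not_ge |>.trans htu

variable {K : Type*} [NormedDivisionRing K] [IsUltrametricDist K]

lemma norm_natCast_eq_pow_padicValNat {p : ℕ} (hp : p.Prime) (hpK : ‖(p : K)‖ < 1)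
    {n : ℕ} (hn : n ≠ 0) : ‖(n : K)‖ = ‖(p : K)‖ ^ padicValNat p n := by
  conv_lhs => rw [← Nat.ordProj_mul_ordCompl_eq_self n p]
  rw [Nat.cast_mul, norm_mul, Nat.cast_pow, norm_pow,
    norm_natCast_eq_one_of_coprime hpK (Nat.coprime_ordCompl hp hn), mul_one,
    Nat.factorization_def n hp]

lemma pow_le_norm_factorial {p : ℕ} (hp : p.Prime) (hpnorm : ‖(p : K)‖ = (p : ℝ)⁻¹) (k : ℕ) :
    ((p : ℝ) ^ (-1 / ((p : ℝ) - 1))) ^ k ≤ ‖(k.factorial : K)‖ := by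
  have : Fact p.Prime := ⟨hp⟩
  have hp1 : (1 : ℝ) < p := by exact_mod_cast hp.one_lt
  have hpK : ‖(p : K)‖ < 1 := hpnorm ▸ inv_lt_one_of_one_lt₀ hp1
  set v := padicValNat p k.factorial
  have hlegendre : ((p : ℝ) - 1) * v ≤ k := by
    have h : (p - 1) * v ≤ k := (sub_one_mul_padicValNat_factorial k).trans_le (Nat.sub_le _ _)
    have hR : ((p - 1 : ℕ) : ℝ) * v ≤ k := by exact_mod_cast h
    rwa [Nat.cast_sub hp.one_le, Nat.cast_one] at hR
  rw [norm_natCast_eq_pow_padicValNat hp hpK k.factorial_ne_zero, hpnorm, inv_pow,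
    ← Real.rpow_natCast, ← Real.rpow_mul (by positivity), ← Real.rpow_natCast,
    ← Real.rpow_neg (by positivity)]
  refine Real.rpow_le_rpow_of_exponent_le hp1.le ?_
  rw [div_mul_eq_mul_div, div_le_iff₀ (by linarith)]
  linarith

lemma norm_div_factorial_le {p : ℕ} (hp : p.Prime) (hpnorm : ‖(p : K)‖ = (p : ℝ)⁻¹)
    {a : K} (ha : ‖a‖ ≤ 1) (k : ℕ) :
    ‖a / (k.factorial : K)‖ ≤ ((p : ℝ) ^ (-1 / ((p : ℝ) - 1)))⁻¹ ^ k := by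
  have hr : 0 < (p : ℝ) ^ (-1 / ((p : ℝ) - 1)) := Real.rpow_pos_of_pos (by exact_mod_cast hp.pos) _
  rw [norm_div, inv_pow, ← one_div]
  exact div_le_div₀ zero_le_one ha (pow_pos hr k) (pow_le_norm_factorial hp hpnorm k)

end NatCast

section PowSuccSeries

variable {K : Type*} [NormedField K]

noncomputable def powSuccSeries (c : ℕ → K) (x : K) : K := ∑' k, c k * x ^ (k + 1)

@[simp]
lemma powSuccSeries_zero (c : ℕ → K) : powSuccSeries c 0 = 0 := by
  simp [powSuccSeries]

variable [IsUltrametricDist K]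

lemma norm_pow_succ_sub_pow_succ_le (x y : K) (n : ℕ) :
    ‖x ^ (n + 1) - y ^ (n + 1)‖ ≤ max ‖x‖ ‖y‖ ^ n * ‖x - y‖ := by
  rw [← geom_sum₂_mul, norm_mul]
  gcongr
  refine norm_sum_le_of_forall_le_of_nonneg (by positivity) fun i hi => ?_
  have hin : i + (n + 1 - 1 - i) = n := by have := Finset.mem_range.1 hi; omega
  calc ‖x ^ i * y ^ (n + 1 - 1 - i)‖ = ‖x‖ ^ i * ‖y‖ ^ (n + 1 - 1 - i) := by
        rw [norm_mul, norm_pow, norm_pow]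
    _ ≤ max ‖x‖ ‖y‖ ^ i * max ‖x‖ ‖y‖ ^ (n + 1 - 1 - i) := by
        gcongr
        exacts [le_max_left _ _, le_max_right _ _]
    _ = max ‖x‖ ‖y‖ ^ n := by rw [← pow_add, hin]

variable {c : ℕ → K} {R : ℝ}

lemma norm_mul_pow_succ_sub_pow_succ_le (hc : ∀ k, ‖c k‖ ≤ R⁻¹ ^ k) (k : ℕ) (x y : K) :
    ‖c k * (x ^ (k + 1) - y ^ (k + 1))‖ ≤ (R⁻¹ * max ‖x‖ ‖y‖) ^ k * ‖x - y‖ := by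
  rw [norm_mul, mul_pow, mul_assoc]
  exact mul_le_mul (hc k) (norm_pow_succ_sub_pow_succ_le x y k) (norm_nonneg _)
    ((norm_nonneg _).trans (hc k))

variable [CompleteSpace K]

lemma summable_mul_pow_succ (hc : ∀ k, ‖c k‖ ≤ R⁻¹ ^ k) {x : K} (hx : ‖x‖ < R) :
    Summable fun k => c k * x ^ (k + 1) := by
  have hR : 0 < R := (norm_nonneg x).trans_lt hx
  refine Summable.of_norm_bounded
    ((summable_geometric_of_lt_one (by positivity) ((inv_mul_lt_one₀ hR).2 hx)).mul_right ‖x‖)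
    fun k => ?_
  simpa using norm_mul_pow_succ_sub_pow_succ_le hc k x 0

lemma norm_powSuccSeries_sub_sub_le (hc : ∀ k, ‖c k‖ ≤ R⁻¹ ^ k) {ρ : ℝ} (hρ : ρ < R)
    {x y : K} (hx : ‖x‖ ≤ ρ) (hy : ‖y‖ ≤ ρ) :
    ‖powSuccSeries c x - powSuccSeries c y - c 0 * (x - y)‖ ≤ R⁻¹ * ρ * ‖x - y‖ := by
  have hρ0 : 0 ≤ ρ := (norm_nonneg x).trans hx
  have hR : 0 < R := hρ0.trans_lt hρ
  have hsx := summable_mul_pow_succ hc (hx.trans_lt hρ)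
  have hsy := summable_mul_pow_succ hc (hy.trans_lt hρ)
  have htail : powSuccSeries c x - powSuccSeries c y - c 0 * (x - y) =
      ∑' k, c (k + 1) * (x ^ (k + 2) - y ^ (k + 2)) := by
    rw [powSuccSeries, powSuccSeries, ← hsx.tsum_sub hsy, (hsx.sub hsy).tsum_eq_zero_add]
    simp [mul_sub]
  have hratio : R⁻¹ * max ‖x‖ ‖y‖ ≤ R⁻¹ * ρ := by gcongr; exact max_le hx hy
  have hratio1 : R⁻¹ * ρ ≤ 1 := ((inv_mul_lt_one₀ hR).2 hρ).le
  rw [htail]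
  refine norm_tsum_le_of_forall_le_of_nonneg (by positivity) fun k => ?_
  refine (norm_mul_pow_succ_sub_pow_succ_le hc (k + 1) x y).trans ?_
  gcongr
  exact (pow_le_pow_left₀ (by positivity) hratio _).trans
    (pow_le_of_le_one (by positivity) hratio1 k.succ_ne_zero)

variable (hc : ∀ k, ‖c k‖ ≤ R⁻¹ ^ k) (hc0 : ‖c 0‖ = 1)
include hc hc0

theorem norm_powSuccSeries_sub {x y : K} (hx : ‖x‖ < R) (hy : ‖y‖ < R) :
    ‖powSuccSeries c x - powSuccSeries c y‖ = ‖x - y‖ := by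
  rcases eq_or_ne x y with rfl | hxy
  · simp
  have hR : 0 < R := (norm_nonneg x).trans_lt hx
  have hlin : ‖c 0 * (x - y)‖ = ‖x - y‖ := by rw [norm_mul, hc0, one_mul]
  have hsmall : ‖powSuccSeries c x - powSuccSeries c y - c 0 * (x - y)‖ < ‖c 0 * (x - y)‖ := by
    rw [hlin]
    refine (norm_powSuccSeries_sub_sub_le hc (max_lt hx hy) (le_max_left _ _)
      (le_max_right _ _)).trans_lt ?_
    exact mul_lt_of_lt_one_left (norm_pos_iff.2 (sub_ne_zero.2 hxy))
      ((inv_mul_lt_one₀ hR).2 (max_lt hx hy))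
  rw [← sub_add_cancel (powSuccSeries c x - powSuccSeries c y) (c 0 * (x - y)),
    norm_add_eq_max_of_norm_ne_norm hsmall.ne, max_eq_right hsmall.le, hlin]

theorem norm_powSuccSeries {x : K} (hx : ‖x‖ < R) : ‖powSuccSeries c x‖ = ‖x‖ := by
  simpa using norm_powSuccSeries_sub hc hc0 hx ((norm_zero (E := K)).trans_lt
    ((norm_nonneg x).trans_lt hx))

theorem exists_powSuccSeries_eq {y : K} (hy : ‖y‖ < R) :
    ∃ x, ‖x‖ ≤ ‖y‖ ∧ powSuccSeries c x = y := by
  have hR : 0 < R := (norm_nonneg y).trans_lt hy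
  have hinv : ‖(c 0)⁻¹‖ = 1 := by rw [norm_inv, hc0, inv_one]
  have hc0' : c 0 ≠ 0 := norm_ne_zero_iff.1 (hc0.trans_ne one_ne_zero)
  set T : K → K := fun z => z + (c 0)⁻¹ * (y - powSuccSeries c z)
  have hT : ∀ z w, ‖z‖ ≤ ‖y‖ → ‖w‖ ≤ ‖y‖ → ‖T z - T w‖ ≤ R⁻¹ * ‖y‖ * ‖z - w‖ := by
    intro z w hz hw
    have hTzw : T z - T w =
        -(c 0)⁻¹ * (powSuccSeries c z - powSuccSeries c w - c 0 * (z - w)) := by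
      simp only [T]
      field_simp
      ring
    rw [hTzw, norm_mul, norm_neg, hinv, one_mul]
    exact norm_powSuccSeries_sub_sub_le hc hy hz hw
  have hk1 : R⁻¹ * ‖y‖ < 1 := (inv_mul_lt_one₀ hR).2 hy
  have hmaps : MapsTo T (closedBall 0 ‖y‖) (closedBall 0 ‖y‖) := by
    intro z hz
    rw [mem_closedBall_zero_iff] at hz ⊢
    have hT0 : ‖T 0‖ = ‖y‖ := by simp [T, hinv]
    have hTz : ‖T z - T 0‖ ≤ ‖y‖ := by
      refine (hT z 0 hz (by simp)).trans ?_
      rw [sub_zero]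
      simpa using mul_le_mul hk1.le hz (norm_nonneg _) zero_le_one
    simpa [hT0, hTz] using norm_add_le_max (T 0) (T z - T 0)
  have hcontr : ContractingWith ⟨R⁻¹ * ‖y‖, by positivity⟩ (hmaps.restrict T _ _) :=
    ⟨hk1, LipschitzWith.of_dist_le_mul fun z w => by
      simp only [Subtype.dist_eq, MapsTo.val_restrict_apply, dist_eq_norm]
      exact hT z w (mem_closedBall_zero_iff.1 z.2) (mem_closedBall_zero_iff.1 w.2)⟩
  obtain ⟨x, hx, hfix, -⟩ := hcontr.exists_fixedPoint' isClosed_closedBall.isComplete hmaps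
    (mem_closedBall_self (norm_nonneg y)) (edist_ne_top _ _)
  refine ⟨x, mem_closedBall_zero_iff.1 hx, ?_⟩
  have hTx : T x = x := hfix
  simp only [T, add_eq_left, mul_eq_zero, inv_eq_zero, sub_eq_zero, hc0', false_or] at hTx
  exact hTx.symm

end PowSuccSeries

theorem isometry_of_integral_coeffs_factorial_general {K : Type*} [NormedField K]
    [CompleteSpace K] [IsUltrametricDist K]
    (p : ℕ) (hp : p.Prime) (hpnorm : ‖(p : K)‖ = (p : ℝ)⁻¹)
    (a : ℕ → K) (ha0 : ‖a 0‖ = 1) (ha : ∀ k, ‖a k‖ ≤ 1) :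
    ∃ F : {x : K // ‖x‖ < (p : ℝ) ^ (-1 / ((p : ℝ) - 1))} →
        {x : K // ‖x‖ < (p : ℝ) ^ (-1 / ((p : ℝ) - 1))},
      Function.Bijective F ∧
      (∀ x : {x : K // ‖x‖ < (p : ℝ) ^ (-1 / ((p : ℝ) - 1))},
        HasSum (fun k => a k / (Nat.factorial k : K) * (x : K) ^ (k + 1)) (F x : K)) ∧
      ∀ x y : {x : K // ‖x‖ < (p : ℝ) ^ (-1 / ((p : ℝ) - 1))},
        ‖(F x : K) - (F y : K)‖ = ‖(x : K) - (y : K)‖ := by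
  set c : ℕ → K := fun k => a k / (Nat.factorial k : K)
  have hc := fun k => norm_div_factorial_le hp hpnorm (ha k) k
  have hc0 : ‖c 0‖ = 1 := by simpa [c] using ha0
  let F : {x : K // ‖x‖ < (p : ℝ) ^ (-1 / ((p : ℝ) - 1))} →
      {x : K // ‖x‖ < (p : ℝ) ^ (-1 / ((p : ℝ) - 1))} :=
    fun x => ⟨powSuccSeries c x, (norm_powSuccSeries hc hc0 x.2).trans_lt x.2⟩
  have hF : ∀ x y, ‖(F x : K) - (F y : K)‖ = ‖(x : K) - (y : K)‖ :=
    fun x y => norm_powSuccSeries_sub hc hc0 x.2 y.2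
  have hFiso : Isometry F := Isometry.of_dist_eq fun x y => by
    simpa only [Subtype.dist_eq, dist_eq_norm] using hF x y
  refine ⟨F, ⟨hFiso.injective, fun y => ?_⟩, fun x => (summable_mul_pow_succ hc x.2).hasSum, hF⟩
  obtain ⟨x, hxy, hx⟩ := exists_powSuccSeries_eq hc hc0 y.2
  exact ⟨⟨x, hxy.trans_lt y.2⟩, Subtype.ext hx⟩

/-- If `f(x) = x ∑ (a_k/k!) x^k` with `‖a_0‖ = 1` and all
`‖a_k‖ ≤ 1` over a complete nonarchimedean normed field of characteristic `0`
with `‖p‖ = 1/p`, then `f` converges on the disk of radius `p^{-1/(p-1)}` and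
defines a bijective isometry of that disk to itself. -/
theorem isometry_of_integral_coeffs_factorial {K : Type*} [NormedField K]
    [CompleteSpace K] [IsUltrametricDist K] [CharZero K]
    (p : ℕ) (hp : p.Prime) (hpnorm : ‖(p : K)‖ = (p : ℝ)⁻¹)
    (a : ℕ → K) (ha0 : ‖a 0‖ = 1) (ha : ∀ k, ‖a k‖ ≤ 1) :
    ∃ F : {x : K // ‖x‖ < (p : ℝ) ^ (-1 / ((p : ℝ) - 1))} →
        {x : K // ‖x‖ < (p : ℝ) ^ (-1 / ((p : ℝ) - 1))},
      Function.Bijective F ∧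
      (∀ x : {x : K // ‖x‖ < (p : ℝ) ^ (-1 / ((p : ℝ) - 1))},
        HasSum (fun k => a k / (Nat.factorial k : K) * (x : K) ^ (k + 1)) (F x : K)) ∧
      ∀ x y : {x : K // ‖x‖ < (p : ℝ) ^ (-1 / ((p : ℝ) - 1))},
        ‖(F x : K) - (F y : K)‖ = ‖(x : K) - (y : K)‖ :=
  isometry_of_integral_coeffs_factorial_general p hp hpnorm a ha0 ha
end
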